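/- arXiv:2502.15378 — 5 statements merged into one kernel-verified Lean document; each statement's English description precedes it below -/
import Mathlib

section
/- In the graph G(k, d, p, φ), the number of vertices is exactly 2k·d^p + 4k^3 + 2k + k^2 + 1 + (d^{p+1} - 1)/(d - 1), which is Θ(k^3 + k·d^p), and the underlying undirected diameter is at most 2p + 2. -/
/-!
STATEMENT 6: the graph `G(k, d, p, φ)` has exactly
`2k·d^p + 4k^3 + 2k + k^2 + 1 + (d^{p+1} - 1)/(d - 1)` vertices, which is `Θ(k^3 + k·d^p)`,
and its underlying undirected diameter is at most `2p + 2`.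
-/

/-- Vertices of the complete `d`-ary tree of depth `p`. -/
abbrev TreeV (d p : ℕ) := Σ i : Fin (p + 1), Fin (d ^ (i : ℕ))

/-- Vertices of `G(2k, d, p)`: `2k` paths of `d^p` vertices each, plus the tree. -/
abbrev BaseV (k d p : ℕ) := (Fin (2 * k) × Fin (d ^ p)) ⊕ TreeV d p

/-- The extra vertices of `G(k, d, p, φ)`: the path `P*` (`k² + 1` vertices), and the paths
`Q^1, …, Q^k` and `R^1, …, R^k` (each with `2k² + 1` vertices). -/
abbrev ExtraV (k : ℕ) :=
  Fin (k ^ 2 + 1) ⊕ ((Fin k × Fin (2 * k ^ 2 + 1)) ⊕ (Fin k × Fin (2 * k ^ 2 + 1)))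

/-- Vertices of `G(k, d, p, φ)`. -/
abbrev GV (k d p : ℕ) := BaseV k d p ⊕ ExtraV k

/-- Path vertex `v^ℓ_j` (for `ℓ < k`) or `w^{ℓ-k}_j` (for `ℓ ≥ k`). -/
def Pv (k d p : ℕ) (ℓ : Fin (2 * k)) (j : Fin (d ^ p)) : GV k d p := Sum.inl (Sum.inl (ℓ, j))
/-- Tree vertex. -/
def Tv (k d p : ℕ) (u : TreeV d p) : GV k d p := Sum.inl (Sum.inr u)
/-- Vertex `s_a` of `P*`. -/
def Sv (k d p : ℕ) (a : Fin (k ^ 2 + 1)) : GV k d p := Sum.inr (Sum.inl a)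
/-- Vertex `q^ℓ_a` of `Q^ℓ`. -/
def Qv (k d p : ℕ) (ℓ : Fin k) (a : Fin (2 * k ^ 2 + 1)) : GV k d p :=
  Sum.inr (Sum.inr (Sum.inl (ℓ, a)))
/-- Vertex `r^ℓ_a` of `R^ℓ`. -/
def Rv (k d p : ℕ) (ℓ : Fin k) (a : Fin (2 * k ^ 2 + 1)) : GV k d p :=
  Sum.inr (Sum.inr (Sum.inr (ℓ, a)))

/-- The edges of `G(k, d, p, φ)` (as an undirected graph). -/
def GkRel (k d p : ℕ) (φ : Fin (k ^ 2) → Fin k × Fin k) (x y : GV k d p) : Prop :=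
  -- edges of the 2k paths `P^ℓ`
  (∃ (ℓ : Fin (2 * k)) (j j' : Fin (d ^ p)), (j' : ℕ) = (j : ℕ) + 1 ∧
      x = Pv k d p ℓ j ∧ y = Pv k d p ℓ j') ∨
  -- tree edges
  (∃ (a a' : Fin (p + 1)) (b : Fin (d ^ (a : ℕ))) (b' : Fin (d ^ (a' : ℕ))),
      (a' : ℕ) = (a : ℕ) + 1 ∧ (b' : ℕ) / d = (b : ℕ) ∧
      x = Tv k d p ⟨a, b⟩ ∧ y = Tv k d p ⟨a', b'⟩) ∨
  -- edges between leaf `u^p_j` and path vertex `v^ℓ_j`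
  (∃ (ℓ : Fin (2 * k)) (j : Fin (d ^ p)) (b : Fin (d ^ ((Fin.last p : Fin (p + 1)) : ℕ))),
      (b : ℕ) = (j : ℕ) ∧ x = Tv k d p ⟨Fin.last p, b⟩ ∧ y = Pv k d p ℓ j) ∨
  -- edges of the path `P*`
  (∃ a a' : Fin (k ^ 2 + 1), (a' : ℕ) = (a : ℕ) + 1 ∧ x = Sv k d p a ∧ y = Sv k d p a') ∨
  -- edges of the paths `Q^ℓ`
  (∃ (ℓ : Fin k) (a a' : Fin (2 * k ^ 2 + 1)), (a' : ℕ) = (a : ℕ) + 1 ∧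
      x = Qv k d p ℓ a ∧ y = Qv k d p ℓ a') ∨
  -- edges of the paths `R^ℓ`
  (∃ (ℓ : Fin k) (a a' : Fin (2 * k ^ 2 + 1)), (a' : ℕ) = (a : ℕ) + 1 ∧
      x = Rv k d p ℓ a ∧ y = Rv k d p ℓ a') ∨
  -- edge from `q^ℓ_{2k²}` to `v^ℓ_0`
  (∃ (ℓ : Fin k) (qa : Fin (2 * k ^ 2 + 1)) (pℓ : Fin (2 * k)) (pj : Fin (d ^ p)),
      (qa : ℕ) = 2 * k ^ 2 ∧ (pℓ : ℕ) = (ℓ : ℕ) ∧ (pj : ℕ) = 0 ∧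
      x = Qv k d p ℓ qa ∧ y = Pv k d p pℓ pj) ∨
  -- edge from `w^ℓ_0` to `r^ℓ_0`
  (∃ (ℓ : Fin k) (ra : Fin (2 * k ^ 2 + 1)) (pℓ : Fin (2 * k)) (pj : Fin (d ^ p)),
      (ra : ℕ) = 0 ∧ (pℓ : ℕ) = (ℓ : ℕ) + k ∧ (pj : ℕ) = 0 ∧
      x = Pv k d p pℓ pj ∧ y = Rv k d p ℓ ra) ∨
  -- complete bipartite graph between the endpoints `v^1,…,v^k` and `w^1,…,w^k`
  (∃ (a b : Fin k) (pa pb : Fin (2 * k)) (j : Fin (d ^ p)),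
      (pa : ℕ) = (a : ℕ) ∧ (pb : ℕ) = (b : ℕ) + k ∧ (j : ℕ) = d ^ p - 1 ∧
      x = Pv k d p pa j ∧ y = Pv k d p pb j) ∨
  -- edges `(s_{i-1}, q^{φ₁(i)}_{2(i-1)})`, `i ∈ [k²]`
  (∃ (i : Fin (k ^ 2)) (sa : Fin (k ^ 2 + 1)) (qa : Fin (2 * k ^ 2 + 1)),
      (sa : ℕ) = (i : ℕ) ∧ (qa : ℕ) = 2 * (i : ℕ) ∧
      x = Sv k d p sa ∧ y = Qv k d p (φ i).1 qa) ∨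
  -- edges `(r^{φ₂(i)}_{2i}, s_i)`, `i ∈ [k²]`
  (∃ (i : Fin (k ^ 2)) (sa : Fin (k ^ 2 + 1)) (ra : Fin (2 * k ^ 2 + 1)),
      (sa : ℕ) = (i : ℕ) + 1 ∧ (ra : ℕ) = 2 * ((i : ℕ) + 1) ∧
      x = Rv k d p (φ i).2 ra ∧ y = Sv k d p sa) ∨
  -- edges from the distinguished leaf `α = u^p_0` to all vertices of `P*`, `Q^ℓ`, `R^ℓ`
  (∃ (b : Fin (d ^ ((Fin.last p : Fin (p + 1)) : ℕ))) (e : ExtraV k),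
      (b : ℕ) = 0 ∧ x = Tv k d p ⟨Fin.last p, b⟩ ∧ y = Sum.inr e)

/-- The (undirected, simple) graph `G(k, d, p, φ)`. -/
def GkGraph (k d p : ℕ) (φ : Fin (k ^ 2) → Fin k × Fin k) : SimpleGraph (GV k d p) :=
  SimpleGraph.fromRel (GkRel k d p φ)

section Aux

open SimpleGraph Finset

private lemma adj_edist_le' {V : Type*} {G : SimpleGraph V} {u v : V} (h : G.Adj u v) :
    G.edist u v ≤ 1 :=
  le_of_eq (SimpleGraph.edist_eq_one_iff_adj.mpr h)

private lemma geom_le_aux {d : ℕ} (hd : 2 ≤ d) : ∀ n, ∑ i ∈ range (n + 1), d ^ i ≤ 2 * d ^ n := by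
  intro n
  induction n with
  | zero => simp
  | succ n ih =>
    rw [Finset.sum_range_succ]
    have h1 : 2 * d ^ n ≤ d * d ^ n := Nat.mul_le_mul_right _ hd
    calc ∑ i ∈ range (n + 1), d ^ i + d ^ (n + 1) ≤ 2 * d ^ n + d ^ (n + 1) := by omega
      _ ≤ d * d ^ n + d ^ (n + 1) := by omega
      _ = 2 * d ^ (n + 1) := by ring

end Aux

theorem stmt6 (k d p : ℕ) (hk : 1 ≤ k) (hd : 2 ≤ d) (hp : 1 ≤ p)
    (φ : Fin (k ^ 2) → Fin k × Fin k) (hφ : Function.Bijective φ) :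
    Fintype.card (GV k d p) =
      2 * k * d ^ p + 4 * k ^ 3 + 2 * k + k ^ 2 + 1 + (d ^ (p + 1) - 1) / (d - 1) ∧
    -- the vertex count is `Θ(k³ + k·d^p)`
    k ^ 3 + k * d ^ p ≤ Fintype.card (GV k d p) ∧
    Fintype.card (GV k d p) ≤ 12 * (k ^ 3 + k * d ^ p) ∧
    -- the underlying undirected diameter is at most `2p + 2`
    ∀ x y : GV k d p, (GkGraph k d p φ).edist x y ≤ 2 * p + 2 := by
  have hd1 : 0 < d := by omega
  -- cardinality
  have hS : ∑ i ∈ Finset.range (p + 1), d ^ i = (d ^ (p + 1) - 1) / (d - 1) :=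
    Nat.geomSum_eq hd (p + 1)
  have hcard : Fintype.card (GV k d p) =
      2 * k * d ^ p + 4 * k ^ 3 + 2 * k + k ^ 2 + 1 + (d ^ (p + 1) - 1) / (d - 1) := by
    have h1 : Fintype.card (GV k d p)
        = 2 * k * d ^ p + (∑ i ∈ Finset.range (p + 1), d ^ i)
          + (k ^ 2 + 1 + (k * (2 * k ^ 2 + 1) + k * (2 * k ^ 2 + 1))) := by
      simp [Fintype.card_sum, Fintype.card_prod, Fintype.card_sigma,
        Fin.sum_univ_eq_sum_range]
    rw [h1, hS]; ring
  -- bounds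
  have hAk : 1 ≤ k ^ 3 := Nat.one_le_pow _ _ hk
  have hBk : k ^ 2 ≤ k ^ 3 := Nat.pow_le_pow_right hk (by omega)
  have hCk : k ≤ k ^ 3 := Nat.le_self_pow (by omega) k
  have hS2 : (d ^ (p + 1) - 1) / (d - 1) ≤ 2 * (k * d ^ p) := by
    rw [← Nat.geomSum_eq hd]
    calc ∑ i ∈ Finset.range (p + 1), d ^ i ≤ 2 * d ^ p := geom_le_aux hd p
      _ ≤ 2 * (k * d ^ p) := by
          have := Nat.le_mul_of_pos_left (d ^ p) hk
          omega
  -- root of the tree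
  set G := GkGraph k d p φ with hG
  let root : GV k d p := Tv k d p ⟨⟨0, Nat.succ_pos p⟩, ⟨0, pow_pos hd1 _⟩⟩
  have key : ∀ (i : ℕ) (hi : i < p + 1) (b : Fin (d ^ i)),
      G.edist (Tv k d p ⟨⟨i, hi⟩, b⟩) root ≤ (i : ℕ∞) := by
    intro i
    induction i with
    | zero =>
      intro hi b
      obtain ⟨bv, hb⟩ := b
      have hb0 : bv = 0 := by simpa using hb
      subst hb0
      have : Tv k d p ⟨⟨0, hi⟩, ⟨0, hb⟩⟩ = root := rfl
      rw [this]
      simp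
    | succ i ih =>
      intro hi b
      have hi' : i < p + 1 := by omega
      have hbd : (b : ℕ) / d < d ^ i := by
        have hb : (b : ℕ) < d * d ^ i := lt_of_lt_of_eq b.isLt (by ring)
        exact Nat.div_lt_of_lt_mul hb
      have hadj : G.Adj (Tv k d p ⟨⟨i + 1, hi⟩, b⟩) (Tv k d p ⟨⟨i, hi'⟩, ⟨(b : ℕ) / d, hbd⟩⟩) := by
        rw [hG, GkGraph, SimpleGraph.fromRel_adj]
        refine ⟨?_, Or.inr ?_⟩
        · intro h
          simp only [Tv, Sum.inl.injEq, Sum.inr.injEq] at h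
          have h2 := congrArg (fun s : TreeV d p => (s.1 : ℕ)) h
          simp at h2
        · exact Or.inr (Or.inl ⟨⟨i, hi'⟩, ⟨i + 1, hi⟩, ⟨(b : ℕ) / d, hbd⟩, b, rfl, rfl, rfl, rfl⟩)
      calc G.edist (Tv k d p ⟨⟨i + 1, hi⟩, b⟩) root
          ≤ G.edist (Tv k d p ⟨⟨i + 1, hi⟩, b⟩) (Tv k d p ⟨⟨i, hi'⟩, ⟨(b : ℕ) / d, hbd⟩⟩)
            + G.edist (Tv k d p ⟨⟨i, hi'⟩, ⟨(b : ℕ) / d, hbd⟩⟩) root := SimpleGraph.edist_triangle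
        _ ≤ 1 + (i : ℕ∞) := add_le_add (adj_edist_le' hadj) (ih hi' _)
        _ = ((i + 1 : ℕ) : ℕ∞) := by push_cast; ring
  have leaf_le : ∀ b : Fin (d ^ p),
      G.edist (Tv k d p ⟨Fin.last p, b⟩) root ≤ (p : ℕ∞) :=
    fun b => key p (Nat.lt_succ_self p) b
  have toRoot : ∀ x : GV k d p, G.edist x root ≤ ((p + 1 : ℕ) : ℕ∞) := by
    rintro ((⟨ℓ, j⟩ | ⟨i, b⟩) | e)
    · -- path vertex
      have hadj : G.Adj (Pv k d p ℓ j) (Tv k d p ⟨Fin.last p, ⟨(j : ℕ), j.isLt⟩⟩) := by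
        rw [hG, GkGraph, SimpleGraph.fromRel_adj]
        refine ⟨by simp [Pv, Tv], Or.inr ?_⟩
        exact Or.inr (Or.inr (Or.inl ⟨ℓ, j, ⟨(j : ℕ), j.isLt⟩, rfl, rfl, rfl⟩))
      calc G.edist (Pv k d p ℓ j) root
          ≤ G.edist (Pv k d p ℓ j) (Tv k d p ⟨Fin.last p, ⟨(j : ℕ), j.isLt⟩⟩)
            + G.edist (Tv k d p ⟨Fin.last p, ⟨(j : ℕ), j.isLt⟩⟩) root := SimpleGraph.edist_triangle
        _ ≤ 1 + (p : ℕ∞) := add_le_add (adj_edist_le' hadj) (leaf_le _)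
        _ = ((p + 1 : ℕ) : ℕ∞) := by push_cast; ring
    · -- tree vertex
      calc G.edist (Tv k d p ⟨i, b⟩) root ≤ ((i : ℕ) : ℕ∞) := key i.val i.isLt b
        _ ≤ ((p + 1 : ℕ) : ℕ∞) := by
            have := i.isLt
            exact_mod_cast Nat.le_of_lt_succ (by omega)
    · -- extra vertex
      have hadj : G.Adj (Sum.inr e : GV k d p)
          (Tv k d p ⟨Fin.last p, ⟨0, pow_pos hd1 _⟩⟩) := by
        rw [hG, GkGraph, SimpleGraph.fromRel_adj]
        refine ⟨by simp [Tv], Or.inr ?_⟩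
        exact Or.inr (Or.inr (Or.inr (Or.inr (Or.inr (Or.inr (Or.inr (Or.inr (Or.inr (Or.inr
          (Or.inr ⟨⟨0, pow_pos hd1 _⟩, e, rfl, rfl, rfl⟩))))))))))
      calc G.edist (Sum.inr e : GV k d p) root
          ≤ G.edist (Sum.inr e : GV k d p) (Tv k d p ⟨Fin.last p, ⟨0, pow_pos hd1 _⟩⟩)
            + G.edist (Tv k d p ⟨Fin.last p, ⟨0, pow_pos hd1 _⟩⟩) root :=
          SimpleGraph.edist_triangle
        _ ≤ 1 + (p : ℕ∞) := add_le_add (adj_edist_le' hadj) (leaf_le _)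
        _ = ((p + 1 : ℕ) : ℕ∞) := by push_cast; ring
  refine ⟨hcard, ?_, ?_, ?_⟩
  · have e1 : 2 * k * d ^ p = 2 * (k * d ^ p) := by ring
    rw [hcard]; omega
  · have e1 : 2 * k * d ^ p = 2 * (k * d ^ p) := by ring
    rw [hcard]; omega
  · intro x y
    calc G.edist x y ≤ G.edist x root + G.edist root y := SimpleGraph.edist_triangle
      _ = G.edist x root + G.edist y root := by rw [SimpleGraph.edist_comm (u := root) (v := y)]
      _ ≤ ((p + 1 : ℕ) : ℕ∞) + ((p + 1 : ℕ) : ℕ∞) := add_le_add (toRoot x) (toRoot y)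
      _ = 2 * (p : ℕ∞) + 2 := by push_cast; ring
end

section
/- In an unweighted directed graph G with s-t shortest path P, for any fixed landmark vertex l the quantity M[l, v_i] := |s→l avoiding edges of P[v_i, t]| is non-decreasing as i decreases; more precisely, M[l, v_i] = min( M[l, v_{i-1}], dist(s, v_i) + dist_{G∖P}(v_i, l) ), where dist_{G∖P} denotes shortest-path distance in G with all edges of P removed. -/
variable {V : Type*}

/-- `x → y` is an edge of the path `P = (v 0, …, v h)`. -/
def PEdge (h : ℕ) (v : ℕ → V) (x y : V) : Prop := ∃ i, i < h ∧ x = v i ∧ y = v (i + 1)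

/-- edges of the subpath `P[v m, v h]` (i.e. `P[v_m, t]`). -/
def PTailEdge (h : ℕ) (v : ℕ → V) (m : ℕ) (x y : V) : Prop :=
  ∃ j, m ≤ j ∧ j < h ∧ x = v j ∧ y = v (j + 1)

/-- Shortest walk length from `a` to `b` in `G` avoiding all (directed) edges in `F`. -/
noncomputable def distAvoid (G F : V → V → Prop) (a b : V) : ℕ∞ :=
  sInf {L : ℕ∞ | ∃ (n : ℕ) (w : ℕ → V), w 0 = a ∧ w n = b ∧
    (∀ t < n, G (w t) (w (t + 1)) ∧ ¬ F (w t) (w (t + 1))) ∧ L = (n : ℕ∞)}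

/-- Shortest-path distance in `G`. -/
noncomputable def distG (G : V → V → Prop) (a b : V) : ℕ∞ :=
  distAvoid G (fun _ _ => False) a b

/-- `M[l, v_i]`: length of a shortest path from `s = v 0` to `l` avoiding all edges of
`P[v_i, t]`. -/
noncomputable def Mland (G : V → V → Prop) (h : ℕ) (v : ℕ → V) (l : V) (i : ℕ) : ℕ∞ :=
  distAvoid G (PTailEdge h v i) (v 0) l

/-!
Walk distances avoiding a set of forbidden edges satisfy the triangle inequality, and on the
shortest path `P` one has `dist(s, v_u) = u`, so the `v_u` are pairwise distinct. Gluing `P[s, v_u]`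
to a `P`-avoiding walk `v_u → l` therefore gives a walk avoiding `P[v_m, t]` for every `m ≥ u`.
Conversely, cut a walk from `s` to `l` avoiding `P[v_i, t]` after its last edge of `P`: that edge
ends at some `v_u` with `u ≤ i`, and the rest avoids `P`, so the walk is at least
`dist(s, v_u) + dist_{G∖P}(v_u, l)`. For `u < i` this bounds `M[l, v_{i-1}]`; for `u = i` it is the
second term of the minimum.
-/

section distAvoid

variable {G F F' : V → V → Prop} {a b c : V}

lemma distAvoid_le_of_walk (n : ℕ) (w : ℕ → V) (h0 : w 0 = a) (hn : w n = b)
    (hs : ∀ t < n, G (w t) (w (t + 1)) ∧ ¬ F (w t) (w (t + 1))) :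
    distAvoid G F a b ≤ n :=
  sInf_le ⟨n, w, h0, hn, hs, rfl⟩

lemma le_distAvoid {d : ℕ∞}
    (h : ∀ (n : ℕ) (w : ℕ → V), w 0 = a → w n = b →
      (∀ t < n, G (w t) (w (t + 1)) ∧ ¬ F (w t) (w (t + 1))) → d ≤ n) :
    d ≤ distAvoid G F a b :=
  le_sInf fun _ ⟨n, w, h0, hn, hs, hL⟩ => hL ▸ h n w h0 hn hs

lemma exists_walk_of_distAvoid_ne_top (hd : distAvoid G F a b ≠ ⊤) :
    ∃ (n : ℕ) (w : ℕ → V), w 0 = a ∧ w n = b ∧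
      (∀ t < n, G (w t) (w (t + 1)) ∧ ¬ F (w t) (w (t + 1))) ∧ distAvoid G F a b = n := by
  have hne : {L : ℕ∞ | ∃ (n : ℕ) (w : ℕ → V), w 0 = a ∧ w n = b ∧
      (∀ t < n, G (w t) (w (t + 1)) ∧ ¬ F (w t) (w (t + 1))) ∧ L = n}.Nonempty := by
    rw [Set.nonempty_iff_ne_empty]
    rintro hempty
    exact hd (by rw [distAvoid, hempty, sInf_empty])
  exact csInf_mem hne

lemma distAvoid_anti (hF : F ≤ F') : distAvoid G F a b ≤ distAvoid G F' a b :=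
  le_distAvoid fun n w h0 hn hs =>
    distAvoid_le_of_walk n w h0 hn fun t ht => ⟨(hs t ht).1, fun hf => (hs t ht).2 (hF _ _ hf)⟩

lemma distAvoid_le_of_segment {w : ℕ → V} {p q : ℕ} (hpq : p ≤ q)
    (hs : ∀ t, p ≤ t → t < q → G (w t) (w (t + 1)) ∧ ¬ F (w t) (w (t + 1))) :
    distAvoid G F (w p) (w q) ≤ (q - p : ℕ) :=
  distAvoid_le_of_walk (q - p) (fun t => w (p + t)) rfl (by rw [Nat.add_sub_cancel' hpq])
    fun t ht => by simpa only [Nat.add_assoc] using hs (p + t) (by omega) (by omega)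

lemma distAvoid_triangle : distAvoid G F a c ≤ distAvoid G F a b + distAvoid G F b c := by
  rcases eq_or_ne (distAvoid G F a b) ⊤ with h₁ | h₁
  · simp [h₁]
  rcases eq_or_ne (distAvoid G F b c) ⊤ with h₂ | h₂
  · simp [h₂]
  obtain ⟨n₁, w₁, h₁0, h₁n, s₁, e₁⟩ := exists_walk_of_distAvoid_ne_top h₁
  obtain ⟨n₂, w₂, h₂0, h₂n, s₂, e₂⟩ := exists_walk_of_distAvoid_ne_top h₂
  set w : ℕ → V := fun t => if t ≤ n₁ then w₁ t else w₂ (t - n₁)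
  have hw₁ : ∀ t ≤ n₁, w t = w₁ t := fun t ht => if_pos ht
  have hw₂ : ∀ t, n₁ ≤ t → w t = w₂ (t - n₁) := by
    intro t ht
    rcases ht.eq_or_lt with rfl | hlt
    · rw [hw₁ _ le_rfl, Nat.sub_self, h₁n, h₂0]
    · exact if_neg (by omega)
  rw [e₁, e₂, ← Nat.cast_add]
  refine distAvoid_le_of_walk _ w ((hw₁ 0 (Nat.zero_le _)).trans h₁0)
    (by rw [hw₂ _ (by omega), Nat.add_sub_cancel_left, h₂n]) fun t ht => ?_
  by_cases htn : t < n₁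
  · rw [hw₁ t htn.le, hw₁ (t + 1) htn]
    exact s₁ t htn
  · rw [hw₂ t (by omega), hw₂ (t + 1) (by omega), Nat.sub_add_comm (by omega)]
    exact s₂ _ (by omega)

lemma distG_add_distAvoid_le {w : ℕ → V} {k n : ℕ} (hkn : k ≤ n)
    (hG : ∀ t < n, G (w t) (w (t + 1)))
    (hF : ∀ t, k ≤ t → t < n → ¬ F (w t) (w (t + 1))) :
    distG G (w 0) (w k) + distAvoid G F (w k) (w n) ≤ n :=
  calc distG G (w 0) (w k) + distAvoid G F (w k) (w n)
      ≤ ((k - 0 : ℕ) : ℕ∞) + ((n - k : ℕ) : ℕ∞) :=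
        add_le_add (distAvoid_le_of_segment k.zero_le fun t _ ht => ⟨hG t (by omega), not_false⟩)
          (distAvoid_le_of_segment hkn fun t hkt htn => ⟨hG t htn, hF t hkt htn⟩)
    _ = n := by rw [← Nat.cast_add]; congr 1; omega

end distAvoid

lemma exists_suffix_avoiding (F : V → V → Prop) (w : ℕ → V) (n : ℕ) :
    ∃ k ≤ n, (k = 0 ∨ ∃ T, k = T + 1 ∧ F (w T) (w (T + 1))) ∧
      ∀ t, k ≤ t → t < n → ¬ F (w t) (w (t + 1)) := by
  induction n with
  | zero => exact ⟨0, le_rfl, Or.inl rfl, fun t _ ht => absurd ht t.not_lt_zero⟩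
  | succ n ih =>
    by_cases hF : F (w n) (w (n + 1))
    · exact ⟨n + 1, le_rfl, Or.inr ⟨n, rfl, hF⟩, fun t ht htn => by omega⟩
    obtain ⟨k, hkn, hlast, hsuf⟩ := ih
    refine ⟨k, by omega, hlast, fun t hkt htn => ?_⟩
    rcases Nat.lt_succ_iff_lt_or_eq.1 htn with htn | rfl
    · exact hsuf t hkt htn
    · exact hF

lemma PTailEdge_anti {h : ℕ} {v : ℕ → V} {m m' : ℕ} (hm : m ≤ m') :
    PTailEdge h v m' ≤ PTailEdge h v m :=
  fun _ _ ⟨j, hj, hjh, hx, hy⟩ => ⟨j, hm.trans hj, hjh, hx, hy⟩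

lemma PTailEdge_le_PEdge {h : ℕ} {v : ℕ → V} {m : ℕ} : PTailEdge h v m ≤ PEdge h v :=
  fun _ _ ⟨j, _, hjh, hx, hy⟩ => ⟨j, hjh, hx, hy⟩

section ShortestPath

variable {G : V → V → Prop} {h : ℕ} {v : ℕ → V}

lemma distG_le_sub (hP : ∀ t < h, G (v t) (v (t + 1))) {p q : ℕ} (hpq : p ≤ q)
    (hqh : q ≤ h) :
    distG G (v p) (v q) ≤ (q - p : ℕ) :=
  distAvoid_le_of_segment hpq fun t _ htq => ⟨hP t (by omega), not_false⟩

lemma distG_start_eq (hP : ∀ t < h, G (v t) (v (t + 1)))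
    (hshort : (h : ℕ∞) ≤ distG G (v 0) (v h)) {u : ℕ} (hu : u ≤ h) :
    distG G (v 0) (v u) = u := by
  refine le_antisymm (by simpa using distG_le_sub hP u.zero_le hu) ?_
  have key : (h : ℕ∞) ≤ distG G (v 0) (v u) + (h - u : ℕ) :=
    hshort.trans (distAvoid_triangle.trans (add_le_add le_rfl (distG_le_sub hP hu le_rfl)))
  generalize distG G (v 0) (v u) = d at key
  induction d using ENat.recTopCoe with
  | top => exact le_top
  | coe d => norm_cast at key ⊢; omega

lemma ne_of_shortest (hP : ∀ t < h, G (v t) (v (t + 1)))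
    (hshort : (h : ℕ∞) ≤ distG G (v 0) (v h)) {p q : ℕ} (hpq : p < q) (hqh : q ≤ h) :
    v p ≠ v q := by
  intro hv
  have key : (h : ℕ∞) ≤ p + (h - q : ℕ) := by
    calc (h : ℕ∞) ≤ distG G (v 0) (v h) := hshort
      _ ≤ distG G (v 0) (v p) + distG G (v q) (v h) := hv ▸ distAvoid_triangle
      _ ≤ p + (h - q : ℕ) := add_le_add (distG_start_eq hP hshort (by omega)).le
            (distG_le_sub hP hqh le_rfl)
  norm_cast at key
  omega

lemma Mland_le_distG_add (hP : ∀ t < h, G (v t) (v (t + 1)))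
    (hshort : (h : ℕ∞) ≤ distG G (v 0) (v h)) (l : V) {u m : ℕ} (hum : u ≤ m)
    (hmh : m ≤ h) :
    Mland G h v l m ≤ distG G (v 0) (v u) + distAvoid G (PEdge h v) (v u) l := by
  have hprefix : distAvoid G (PTailEdge h v m) (v 0) (v u) ≤ (u - 0 : ℕ) :=
    distAvoid_le_of_segment u.zero_le fun t _ htu =>
      ⟨hP t (by omega),
        fun ⟨j, hmj, hjh, hx, _⟩ => ne_of_shortest hP hshort (by omega) hjh.le hx⟩
  rw [distG_start_eq hP hshort (hum.trans hmh)]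
  exact distAvoid_triangle.trans
    (add_le_add (by simpa using hprefix) (distAvoid_anti PTailEdge_le_PEdge))

lemma min_le_Mland (hP : ∀ t < h, G (v t) (v (t + 1)))
    (hshort : (h : ℕ∞) ≤ distG G (v 0) (v h)) (l : V) {i : ℕ} (hih : i ≤ h) :
    min (Mland G h v l (i - 1)) (distG G (v 0) (v i) + distAvoid G (PEdge h v) (v i) l) ≤
      Mland G h v l i := by
  refine le_distAvoid fun n w h0 hn hs => ?_
  obtain ⟨k, hkn, hlast, hsuf⟩ := exists_suffix_avoiding (PEdge h v) w n
  obtain ⟨u, hui, hwk⟩ : ∃ u ≤ i, w k = v u := by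
    rcases hlast with rfl | ⟨T, rfl, j, hjh, hx, hy⟩
    · exact ⟨0, i.zero_le, h0⟩
    · refine ⟨j + 1, ?_, hy⟩
      by_contra hji
      exact (hs T (by omega)).2 ⟨j, by omega, hjh, hx, hy⟩
  have hlen := distG_add_distAvoid_le hkn (fun t ht => (hs t ht).1) hsuf
  rw [h0, hn, hwk] at hlen
  rcases hui.lt_or_eq with hui | rfl
  · exact (min_le_left _ _).trans
      ((Mland_le_distG_add hP hshort l (by omega) (by omega)).trans hlen)
  · exact (min_le_right _ _).trans hlen

end ShortestPath

theorem stmt8_general (G : V → V → Prop) (h : ℕ) (v : ℕ → V) (l : V)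
    (hP : ∀ t < h, G (v t) (v (t + 1)))
    (hshortest : ∀ (L : ℕ) (w : ℕ → V), w 0 = v 0 → w L = v h →
      (∀ t < L, G (w t) (w (t + 1))) → h ≤ L)
    (i : ℕ) (hih : i ≤ h) :
    Mland G h v l i ≤ Mland G h v l (i - 1) ∧
    Mland G h v l i =
      min (Mland G h v l (i - 1))
        (distG G (v 0) (v i) + distAvoid G (PEdge h v) (v i) l) := by
  have hshort : (h : ℕ∞) ≤ distG G (v 0) (v h) :=
    le_distAvoid fun n w h0 hn hs => by
      exact_mod_cast hshortest n w h0 hn fun t ht => (hs t ht).1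
  have hmono : Mland G h v l i ≤ Mland G h v l (i - 1) :=
    distAvoid_anti (PTailEdge_anti (Nat.sub_le i 1))
  exact ⟨hmono, le_antisymm (le_min hmono (Mland_le_distG_add hP hshort l le_rfl hih))
    (min_le_Mland hP hshort l hih)⟩

theorem stmt8 (G : V → V → Prop) (h : ℕ) (v : ℕ → V) (l : V)
    (hP : ∀ t < h, G (v t) (v (t + 1)))
    (hshortest : ∀ (L : ℕ) (w : ℕ → V), w 0 = v 0 → w L = v h →
      (∀ t < L, G (w t) (w (t + 1))) → h ≤ L)
    (i : ℕ) (hi1 : 1 ≤ i) (hih : i ≤ h) :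
    Mland G h v l i ≤ Mland G h v l (i - 1) ∧
    Mland G h v l i =
      min (Mland G h v l (i - 1))
        (distG G (v 0) (v i) + distAvoid G (PEdge h v) (v i) l) :=
  stmt8_general G h v l hP hshortest i hih
end

section
/- Define M^i[l, v] = min over vertices u on the segment of P from checkpoint c_i to v of ( dist(s,u) + dist_{G∖P}(u, l) ). Then for any vertex v on segment P[c_k, c_{k+1}] and landmark l, the length of the shortest s-to-l path avoiding all edges of P[v, t] equals min( M^k[l, v], min over x < k of M^x[l, c_{x+1}] ). -/
/-!
STATEMENT 9: with `M^x[l, v] = min over u on segment P[c_x, v] of (dist(s,u) + dist_{G∖P}(u,l))`,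
for any vertex `v = v_t` on segment `P[c_k, c_{k+1}]` and landmark `l`, the length of a shortest
s-to-l path avoiding all edges of `P[v_t, t]` equals
`min( M^k[l, v_t], min over x < k of M^x[l, c_{x+1}] )`.
-/

variable {V : Type*}

/-- `M^x[l, v_t] = min over u with c_x ≤ u ≤ t of ( dist(s, v_u) + dist_{G∖P}(v_u, l) )`. -/
noncomputable def Mseg (G : V → V → Prop) (h : ℕ) (v : ℕ → V) (c : ℕ → ℕ) (l : V)
    (x t : ℕ) : ℕ∞ :=
  sInf {y : ℕ∞ | ∃ u : ℕ, c x ≤ u ∧ u ≤ t ∧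
    y = distG G (v 0) (v u) + distAvoid G (PEdge h v) (v u) l}

lemma distAvoid_le_walk (G F : V → V → Prop) (a b : V) (n : ℕ) (w : ℕ → V)
    (h0 : w 0 = a) (hn : w n = b)
    (hw : ∀ i < n, G (w i) (w (i + 1)) ∧ ¬ F (w i) (w (i + 1))) :
    distAvoid G F a b ≤ (n : ℕ∞) :=
  sInf_le ⟨n, w, h0, hn, hw, rfl⟩

section main
variable (G : V → V → Prop) (h : ℕ) (v : ℕ → V)
variable (hP : ∀ t < h, G (v t) (v (t + 1)))
variable (hshortest : ∀ (L : ℕ) (w : ℕ → V), w 0 = v 0 → w L = v h →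
      (∀ t < L, G (w t) (w (t + 1))) → h ≤ L)

include hP hshortest in
lemma path_inj : ∀ i j, i < j → j ≤ h → v i ≠ v j := by
  intro i j hij hjh heq
  set n := i + (h - j) with hn
  have key := hshortest n (fun s => if s ≤ i then v s else v (s + (j - i)))
    (by simp)
    (by
      by_cases hni : n ≤ i
      · simp only [if_pos hni]
        have : n = i := by omega
        rw [this, heq]
        exact congrArg v (by omega)
      · simp only [if_neg hni]
        exact congrArg v (by omega))
    (by
      intro s hs
      by_cases h1 : s + 1 ≤ i
      · simp only [if_pos (by omega : s ≤ i), if_pos h1]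
        exact hP s (by omega)
      · by_cases h2 : s ≤ i
        · have hsi : s = i := by omega
          have hjlt : j < h := by omega
          simp only [if_pos h2, if_neg h1]
          rw [hsi, heq, show i + 1 + (j - i) = j + 1 from by omega]
          exact hP j hjlt
        · simp only [if_neg h2, if_neg h1]
          rw [show s + 1 + (j - i) = (s + (j - i)) + 1 from by omega]
          exact hP (s + (j - i)) (by omega))
  omega

include hP hshortest in
lemma distG_prefix (u : ℕ) (hu : u ≤ h) : distG G (v 0) (v u) = (u : ℕ∞) := by
  apply le_antisymm
  · exact distAvoid_le_walk G _ _ _ u v rfl rfl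
      (fun i hi => ⟨hP i (by omega), not_false⟩)
  · apply le_sInf
    rintro L ⟨n, w, h0, hn, hw, rfl⟩
    have key := hshortest (n + (h - u)) (fun s => if s < n then w s else v (u + (s - n)))
      (by
        by_cases h0n : 0 < n
        · simpa [h0n] using h0
        · have : n = 0 := by omega
          subst this
          simp only [lt_self_iff_false, if_false, Nat.sub_self, Nat.add_zero]
          rw [← hn]; exact h0)
      (by
        simp only [if_neg (by omega : ¬ n + (h - u) < n)]
        exact congrArg v (by omega))
      (by
        intro s hs
        by_cases h1 : s < n
        · simp only [if_pos h1]
          have : (if s + 1 < n then w (s + 1) else v (u + (s + 1 - n))) = w (s + 1) := by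
            by_cases h2 : s + 1 < n
            · simp [h2]
            · have h3 : s + 1 = n := by omega
              simp only [h3, hn, Nat.sub_self, Nat.add_zero, lt_self_iff_false, if_false]
          rw [this]
          exact (hw s h1).1
        · simp only [if_neg h1, if_neg (by omega : ¬ s + 1 < n)]
          rw [show u + (s + 1 - n) = (u + (s - n)) + 1 from by omega]
          exact hP (u + (s - n)) (by omega))
    have : u ≤ n := by omega
    exact_mod_cast this

include hP hshortest in
lemma upper_bound (l : V) (t u : ℕ) (hth : t ≤ h) (hut : u ≤ t) :
    distAvoid G (PTailEdge h v t) (v 0) l ≤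
      distG G (v 0) (v u) + distAvoid G (PEdge h v) (v u) l := by
  rw [distG_prefix G h v hP hshortest u (by omega)]
  have main : ∀ L ∈ {L : ℕ∞ | ∃ (n : ℕ) (w : ℕ → V), w 0 = v u ∧ w n = l ∧
      (∀ i < n, G (w i) (w (i + 1)) ∧ ¬ PEdge h v (w i) (w (i + 1))) ∧ L = (n : ℕ∞)},
      distAvoid G (PTailEdge h v t) (v 0) l ≤ (u : ℕ∞) + L := by
    rintro L ⟨n, w, h0, hn, hw, rfl⟩
    have := distAvoid_le_walk G (PTailEdge h v t) (v 0) l (u + n)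
      (fun s => if s < u then v s else w (s - u))
      (by
        by_cases h0u : 0 < u
        · simp [h0u]
        · have : u = 0 := by omega
          subst this
          simpa using h0)
      (by
        simp only [if_neg (by omega : ¬ u + n < u)]
        rw [show u + n - u = n from by omega, hn])
      (by
        intro s hs
        by_cases h1 : s < u
        · have hw1 : (if s + 1 < u then v (s + 1) else w (s + 1 - u)) = v (s + 1) := by
            by_cases h2 : s + 1 < u
            · simp [h2]
            · have hsu : s + 1 = u := by omega
              simp only [hsu, lt_self_iff_false, if_false, Nat.sub_self, h0]
          simp only [if_pos h1, hw1]
          refine ⟨hP s (by omega), ?_⟩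
          rintro ⟨j, htj, hjh, e1, e2⟩
          exact path_inj G h v hP hshortest s j (by omega) (by omega) e1
        · simp only [if_neg h1, if_neg (by omega : ¬ s + 1 < u)]
          rw [show s + 1 - u = (s - u) + 1 from by omega]
          have hsn : s - u < n := by omega
          refine ⟨(hw _ hsn).1, ?_⟩
          rintro ⟨j, _, hjh, e1, e2⟩
          exact (hw _ hsn).2 ⟨j, hjh, e1, e2⟩)
    calc distAvoid G (PTailEdge h v t) (v 0) l ≤ ((u + n : ℕ) : ℕ∞) := this
      _ = (u : ℕ∞) + (n : ℕ∞) := by push_cast; ring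
  rcases Set.eq_empty_or_nonempty {L : ℕ∞ | ∃ (n : ℕ) (w : ℕ → V), w 0 = v u ∧ w n = l ∧
      (∀ i < n, G (w i) (w (i + 1)) ∧ ¬ PEdge h v (w i) (w (i + 1))) ∧ L = (n : ℕ∞)} with he | hne
  · show _ ≤ _ + distAvoid G (PEdge h v) (v u) l
    unfold distAvoid
    rw [show {L : ℕ∞ | ∃ (n : ℕ) (w : ℕ → V), w 0 = v u ∧ w n = l ∧
      (∀ i < n, G (w i) (w (i + 1)) ∧ ¬ PEdge h v (w i) (w (i + 1))) ∧ L = (n : ℕ∞)} = ∅ from he]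
    simp
  · have hmem := csInf_mem hne
    exact main _ hmem

omit hP hshortest in
lemma lower_bound (l : V) (t : ℕ) (n : ℕ) (w : ℕ → V)
    (h0 : w 0 = v 0) (hn : w n = l)
    (hw : ∀ i < n, G (w i) (w (i + 1)) ∧ ¬ PTailEdge h v t (w i) (w (i + 1))) :
    ∃ u, u ≤ t ∧
      distG G (v 0) (v u) + distAvoid G (PEdge h v) (v u) l ≤ (n : ℕ∞) := by
  classical
  by_cases hex : ∃ i, i < n ∧ PEdge h v (w i) (w (i + 1))
  · set Q : ℕ → Prop := fun i => i < n ∧ PEdge h v (w i) (w (i + 1)) with hQ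
    obtain ⟨i0, hi0n, hi0e⟩ := hex
    set i := Nat.findGreatest Q n with hi
    have hQi : Q i := Nat.findGreatest_spec (m := i0) (by omega) ⟨hi0n, hi0e⟩
    have hgreat : ∀ j, i < j → j < n → ¬ PEdge h v (w j) (w (j + 1)) := by
      intro j hij hjn hedge
      exact Nat.findGreatest_is_greatest hij (by omega) ⟨hjn, hedge⟩
    obtain ⟨hin, j, hjh, e1, e2⟩ := hQi
    have hjt : j < t := by
      by_contra hjt
      exact (hw i hin).2 ⟨j, by omega, hjh, e1, e2⟩
    refine ⟨j + 1, by omega, ?_⟩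
    have hd1 : distG G (v 0) (v (j + 1)) ≤ ((i + 1 : ℕ) : ℕ∞) :=
      distAvoid_le_walk G _ _ _ (i + 1) w h0 e2
        (fun s hs => ⟨(hw s (by omega)).1, not_false⟩)
    have hd2 : distAvoid G (PEdge h v) (v (j + 1)) l ≤ ((n - (i + 1) : ℕ) : ℕ∞) :=
      distAvoid_le_walk G _ _ _ (n - (i + 1)) (fun s => w (i + 1 + s))
        e2
        (by show w (i + 1 + (n - (i + 1))) = l
            rw [show i + 1 + (n - (i + 1)) = n from by omega]; exact hn)
        (by
          intro s hs
          refine ⟨(hw (i + 1 + s) (by omega)).1, ?_⟩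
          exact hgreat (i + 1 + s) (by omega) (by omega))
    calc distG G (v 0) (v (j + 1)) + distAvoid G (PEdge h v) (v (j + 1)) l
        ≤ ((i + 1 : ℕ) : ℕ∞) + ((n - (i + 1) : ℕ) : ℕ∞) := add_le_add hd1 hd2
      _ = ((n : ℕ) : ℕ∞) := by
          rw [← Nat.cast_add]
          exact congrArg _ (by omega)
  · push_neg at hex
    refine ⟨0, by omega, ?_⟩
    have hd1 : distG G (v 0) (v 0) ≤ ((0 : ℕ) : ℕ∞) :=
      distAvoid_le_walk G _ _ _ 0 (fun _ => v 0) rfl rfl (by omega)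
    have hd2 : distAvoid G (PEdge h v) (v 0) l ≤ (n : ℕ∞) :=
      distAvoid_le_walk G _ _ _ n w h0 hn
        (fun s hs => ⟨(hw s hs).1, hex s hs⟩)
    calc distG G (v 0) (v 0) + distAvoid G (PEdge h v) (v 0) l
        ≤ ((0 : ℕ) : ℕ∞) + (n : ℕ∞) := add_le_add hd1 hd2
      _ = (n : ℕ∞) := by simp

end main

theorem stmt9 (G : V → V → Prop) (h : ℕ) (v : ℕ → V) (l : V)
    (hP : ∀ t < h, G (v t) (v (t + 1)))
    (hshortest : ∀ (L : ℕ) (w : ℕ → V), w 0 = v 0 → w L = v h →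
      (∀ t < L, G (w t) (w (t + 1))) → h ≤ L)
    -- checkpoints `c 0 = 0 < c 1 < … < c m = h`
    (c : ℕ → ℕ) (m : ℕ) (hc0 : c 0 = 0) (hcm : c m = h)
    (hmono : ∀ x < m, c x < c (x + 1))
    -- `v t` lies on segment `P[c_k, c_{k+1}]`
    (k t : ℕ) (hk : k < m) (ht1 : c k ≤ t) (ht2 : t ≤ c (k + 1)) :
    distAvoid G (PTailEdge h v t) (v 0) l =
      min (Mseg G h v c l k t)
        (sInf {y : ℕ∞ | ∃ x : ℕ, x < k ∧ y = Mseg G h v c l x (c (x + 1))}) := by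
  have cmono : ∀ a b, a ≤ b → b ≤ m → c a ≤ c b := by
    intro a b hab hbm
    induction b with
    | zero => have : a = 0 := by omega
              rw [this]
    | succ b ih =>
      rcases Nat.lt_or_ge a (b + 1) with hlt | hge
      · exact le_trans (ih (by omega) (by omega)) (le_of_lt (hmono b (by omega)))
      · have : a = b + 1 := by omega
        rw [this]
  have hth : t ≤ h := by
    calc t ≤ c (k + 1) := ht2
      _ ≤ c m := cmono (k + 1) m (by omega) le_rfl
      _ = h := hcm
  apply le_antisymm
  · apply le_min
    · apply le_sInf
      rintro y ⟨u, hcu, hut, rfl⟩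
      exact upper_bound G h v hP hshortest l t u hth hut
    · apply le_sInf
      rintro y ⟨x, hxk, rfl⟩
      apply le_sInf
      rintro y ⟨u, hcxu, hucx, rfl⟩
      have hut : u ≤ t := by
        calc u ≤ c (x + 1) := hucx
          _ ≤ c k := cmono (x + 1) k (by omega) (by omega)
          _ ≤ t := ht1
      exact upper_bound G h v hP hshortest l t u hth hut
  · apply le_sInf
    rintro L ⟨n, w, h0, hn, hw, rfl⟩
    obtain ⟨u, hut, hfu⟩ := lower_bound G h v l t n w h0 hn hw
    rcases Nat.lt_or_ge u (c k) with hlt | hge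
    · have hfind : ∀ k', u < c k' → ∃ x, x < k' ∧ c x ≤ u ∧ u ≤ c (x + 1) := by
        intro k'
        induction k' with
        | zero => exact fun hu => absurd hu (by omega)
        | succ k' ih =>
          intro hu
          by_cases hcu : c k' ≤ u
          · exact ⟨k', by omega, hcu, le_of_lt hu⟩
          · obtain ⟨x, hx1, hx2, hx3⟩ := ih (by omega)
            exact ⟨x, by omega, hx2, hx3⟩
      obtain ⟨x, hxk, hcx, hcx1⟩ := hfind k hlt
      refine le_trans (min_le_right _ _) (le_trans (sInf_le ⟨x, hxk, rfl⟩) ?_)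
      exact le_trans (sInf_le ⟨u, hcx, hcx1, rfl⟩) hfu
    · exact le_trans (min_le_left _ _) (le_trans (sInf_le ⟨u, hge, hut, rfl⟩) hfu)
end

section
/- Let G be a weighted directed graph, P a path, ε ∈ (0,1), ζ > 0, d > 0, μ_d = εd/(2ζ), and G_d the rounded graph where each edge e of G∖P is replaced by a path of ⌈w(e)/μ_d⌉ edges of weight μ_d. If there is a u-v path in G∖P of total weight d' with d/2 ≤ d' ≤ d and at most ζ edges, then there is a u-v path in G_d of total weight at most d'·(1+ε) and with at most ζ·(1 + 2/ε) edges. -/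
/-!
Rounding an edge of weight `x` up to a multiple of `μ` costs at most one extra hop and at most
`μ` extra weight. Over at most `ζ` edges this adds at most `ζ μ = εd/2 ≤ εd'` to the weight, while
the number of hops is at most `d'/μ + ζ ≤ d/μ + ζ = ζ(1 + 2/ε)`.
-/

open Finset

lemma natCeil_div_le_div_add_one {x μ : ℝ} (hx : 0 ≤ x) (hμ : 0 < μ) :
    (⌈x / μ⌉₊ : ℝ) ≤ x / μ + 1 :=
  (Nat.ceil_lt_add_one (div_nonneg hx hμ.le)).le

lemma mul_natCeil_div_le_add {x μ : ℝ} (hx : 0 ≤ x) (hμ : 0 < μ) :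
    μ * (⌈x / μ⌉₊ : ℝ) ≤ x + μ :=
  calc μ * (⌈x / μ⌉₊ : ℝ) ≤ μ * (x / μ + 1) := by
        gcongr; exact natCeil_div_le_div_add_one hx hμ
    _ = x + μ := by field_simp

section Rounding

variable {ι : Type*} {s : Finset ι} {f : ι → ℝ} {μ : ℝ}

lemma sum_natCeil_div_le (hf : ∀ i ∈ s, 0 ≤ f i) (hμ : 0 < μ) :
    ((∑ i ∈ s, ⌈f i / μ⌉₊ : ℕ) : ℝ) ≤ (∑ i ∈ s, f i) / μ + #s := by
  push_cast
  calc ∑ i ∈ s, (⌈f i / μ⌉₊ : ℝ) ≤ ∑ i ∈ s, (f i / μ + 1) :=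
        sum_le_sum fun i hi ↦ natCeil_div_le_div_add_one (hf i hi) hμ
    _ = (∑ i ∈ s, f i) / μ + #s := by
        rw [sum_add_distrib, sum_div, sum_const, nsmul_one]

lemma sum_mul_natCeil_div_le (hf : ∀ i ∈ s, 0 ≤ f i) (hμ : 0 < μ) :
    ∑ i ∈ s, μ * (⌈f i / μ⌉₊ : ℝ) ≤ ∑ i ∈ s, f i + #s * μ := by
  calc ∑ i ∈ s, μ * (⌈f i / μ⌉₊ : ℝ) ≤ ∑ i ∈ s, (f i + μ) :=
        sum_le_sum fun i hi ↦ mul_natCeil_div_le_add (hf i hi) hμ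
    _ = ∑ i ∈ s, f i + #s * μ := by
        rw [sum_add_distrib, sum_const, nsmul_eq_mul]

variable {ε d : ℝ} {ζ : ℕ}

lemma sum_mul_natCeil_div_le_mul_one_add (hf : ∀ i ∈ s, 0 ≤ f i) (hε : 0 < ε) (hd : 0 < d)
    (hζ : 0 < ζ) (hμ : μ = ε * d / (2 * ζ)) (hs : #s ≤ ζ) (hlo : d / 2 ≤ ∑ i ∈ s, f i) :
    ∑ i ∈ s, μ * (⌈f i / μ⌉₊ : ℝ) ≤ (∑ i ∈ s, f i) * (1 + ε) := by
  have hμ0 : 0 < μ := by rw [hμ]; positivity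
  have hζμ : (ζ : ℝ) * μ = ε * d / 2 := by rw [hμ]; field_simp
  have hsμ : (#s : ℝ) * μ ≤ ζ * μ := by gcongr
  have hεd : ε * d / 2 ≤ ε * ∑ i ∈ s, f i := by nlinarith
  linarith [sum_mul_natCeil_div_le hf hμ0]

lemma sum_natCeil_div_le_mul_one_add (hf : ∀ i ∈ s, 0 ≤ f i) (hε : 0 < ε) (hd : 0 < d)
    (hζ : 0 < ζ) (hμ : μ = ε * d / (2 * ζ)) (hs : #s ≤ ζ) (hhi : ∑ i ∈ s, f i ≤ d) :
    ((∑ i ∈ s, ⌈f i / μ⌉₊ : ℕ) : ℝ) ≤ ζ * (1 + 2 / ε) := by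
  have hμ0 : 0 < μ := by rw [hμ]; positivity
  have hdμ : d / μ = 2 * ζ / ε := by rw [hμ]; field_simp
  have hsum : (∑ i ∈ s, f i) / μ ≤ d / μ := by gcongr
  have hsζ : (#s : ℝ) ≤ ζ := by exact_mod_cast hs
  calc ((∑ i ∈ s, ⌈f i / μ⌉₊ : ℕ) : ℝ) ≤ (∑ i ∈ s, f i) / μ + #s := sum_natCeil_div_le hf hμ0
    _ ≤ 2 * ζ / ε + ζ := by linarith
    _ = ζ * (1 + 2 / ε) := by ring

end Rounding

variable {V : Type*}

theorem stmt11_general (G : V → V → Prop) (Pedge : V → V → Prop) (c : V → V → ℝ)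
    (hpos : ∀ a b : V, G a b → 0 < c a b)
    (ε d : ℝ) (hε0 : 0 < ε) (hd : 0 < d)
    (ζ : ℕ) (hζ : 0 < ζ)
    (μ : ℝ) (hμ : μ = ε * d / (2 * ζ))
    -- a `u`-`v` path in `G∖P` with `L ≤ ζ` edges and total weight `d' ∈ [d/2, d]`
    (L : ℕ) (w : ℕ → V)
    (hwalk : ∀ t < L, G (w t) (w (t + 1)) ∧ ¬ Pedge (w t) (w (t + 1)))
    (hL : L ≤ ζ)
    (d' : ℝ) (hd' : d' = ∑ t ∈ Finset.range L, c (w t) (w (t + 1)))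
    (hd'lo : d / 2 ≤ d') (hd'hi : d' ≤ d) :
    -- the corresponding path in `G_d`: total weight at most `d'·(1+ε)` …
    (∑ t ∈ Finset.range L, μ * (⌈c (w t) (w (t + 1)) / μ⌉₊ : ℝ)) ≤ d' * (1 + ε) ∧
    -- … and at most `ζ·(1 + 2/ε)` edges (hops)
    ((∑ t ∈ Finset.range L, ⌈c (w t) (w (t + 1)) / μ⌉₊ : ℕ) : ℝ) ≤ (ζ : ℝ) * (1 + 2 / ε) := by
  have hc : ∀ t ∈ range L, 0 ≤ c (w t) (w (t + 1)) := fun t ht ↦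
    (hpos _ _ (hwalk t (mem_range.mp ht)).1).le
  have hcard : #(range L) ≤ ζ := by rwa [card_range]
  subst hd'
  exact ⟨sum_mul_natCeil_div_le_mul_one_add hc hε0 hd hζ hμ hcard hd'lo,
    sum_natCeil_div_le_mul_one_add hc hε0 hd hζ hμ hcard hd'hi⟩

theorem stmt11 (G : V → V → Prop) (Pedge : V → V → Prop) (c : V → V → ℝ)
    (hpos : ∀ a b : V, G a b → 0 < c a b)
    (ε d : ℝ) (hε0 : 0 < ε) (hε1 : ε < 1) (hd : 0 < d)
    (ζ : ℕ) (hζ : 0 < ζ)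
    (μ : ℝ) (hμ : μ = ε * d / (2 * ζ))
    -- a `u`-`v` path in `G∖P` with `L ≤ ζ` edges and total weight `d' ∈ [d/2, d]`
    (u v : V) (L : ℕ) (w : ℕ → V) (hw0 : w 0 = u) (hwL : w L = v)
    (hwalk : ∀ t < L, G (w t) (w (t + 1)) ∧ ¬ Pedge (w t) (w (t + 1)))
    (hL : L ≤ ζ)
    (d' : ℝ) (hd' : d' = ∑ t ∈ Finset.range L, c (w t) (w (t + 1)))
    (hd'lo : d / 2 ≤ d') (hd'hi : d' ≤ d) :
    -- the corresponding path in `G_d`: total weight at most `d'·(1+ε)` …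
    (∑ t ∈ Finset.range L, μ * (⌈c (w t) (w (t + 1)) / μ⌉₊ : ℝ)) ≤ d' * (1 + ε) ∧
    -- … and at most `ζ·(1 + 2/ε)` edges (hops)
    ((∑ t ∈ Finset.range L, ⌈c (w t) (w (t + 1)) / μ⌉₊ : ℕ) : ℝ) ≤ (ζ : ℝ) * (1 + 2 / ε) :=
  stmt11_general G Pedge c hpos ε d hε0 hd ζ hζ μ hμ L w hwalk hL d' hd' hd'lo hd'hi
end

section
/- With intervals I_1 = [l_1, r_1], ..., I_ℓ = [l_ℓ, r_ℓ] partitioning {0,...,h} and an edge index i with {i, i+1} ⊆ I_j for some 1 < j < ℓ, the quantity X((-∞, i], [i+1, ∞)) equals min( X([l_j, i], [i+1, ∞)), X((-∞, i], [i+1, r_j]), X((-∞, r_{j-1}], [l_{j+1}, ∞)) ). -/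
/-!
STATEMENT 13: with intervals `I_1, …, I_ℓ` partitioning `{0,…,h}` and an edge index `i` with
`{i, i+1} ⊆ I_j` for some `1 < j < ℓ`,
`X((-∞, i], [i+1, ∞)) = min( X([l_j, i], [i+1, ∞)), X((-∞, i], [i+1, r_j]),
X((-∞, r_{j-1}], [l_{j+1}, ∞)) )`.
-/

open scoped ENNReal

/-- `X(A,B)`: minimum over `a ∈ A`, `b ∈ B` with `a < b` of `X({a},{b})` (`Xp a b`, the
shortest short-detour replacement path length with detour starting exactly at `v_a` and
ending exactly at `v_b`); `∞` if none. -/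
noncomputable def XofSets (Xp : ℕ → ℕ → ℝ≥0∞) (A B : Set ℕ) : ℝ≥0∞ :=
  sInf {y : ℝ≥0∞ | ∃ a ∈ A, ∃ b ∈ B, a < b ∧ y = Xp a b}

theorem stmt13 (Xp : ℕ → ℕ → ℝ≥0∞) (h ℓ : ℕ) (l r : ℕ → ℕ)
    -- consecutive intervals `I_x = [l x, r x]`, `x = 1, …, ℓ`, partitioning `{0,…,h}`
    (hl1 : l 1 = 0) (hrℓ : r ℓ = h)
    (hcons : ∀ x, 1 ≤ x → x < ℓ → l (x + 1) = r x + 1)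
    (hlr : ∀ x, 1 ≤ x → x ≤ ℓ → l x ≤ r x)
    (j : ℕ) (hj1 : 1 < j) (hjℓ : j < ℓ)
    (i : ℕ) (hi1 : l j ≤ i) (hi2 : i + 1 ≤ r j) :
    XofSets Xp (Set.Iic i) (Set.Ici (i + 1)) =
      min (min (XofSets Xp (Set.Icc (l j) i) (Set.Ici (i + 1)))
               (XofSets Xp (Set.Iic i) (Set.Icc (i + 1) (r j))))
          (XofSets Xp (Set.Iic (r (j - 1))) (Set.Ici (l (j + 1)))) := by
  have hj1' : 1 ≤ j - 1 := by omega
  have hjl' : j - 1 < ℓ := by omega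
  have hlj : l j = r (j - 1) + 1 := by
    have := hcons (j - 1) hj1' hjl'
    have : l (j - 1 + 1) = r (j - 1) + 1 := this
    rwa [Nat.sub_add_cancel (by omega : 1 ≤ j)] at this
  have hlj1 : l (j + 1) = r j + 1 := hcons j (by omega) hjℓ
  apply le_antisymm
  · apply le_min
    apply le_min
    · apply sInf_le_sInf
      rintro y ⟨a, ha, b, hb, hab, hy⟩
      exact ⟨a, ha.2, b, hb, hab, hy⟩
    · apply sInf_le_sInf
      rintro y ⟨a, ha, b, hb, hab, hy⟩
      exact ⟨a, ha, b, hb.1, hab, hy⟩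
    · apply sInf_le_sInf
      rintro y ⟨a, ha, b, hb, hab, hy⟩
      refine ⟨a, ?_, b, ?_, hab, hy⟩
      · simp only [Set.mem_Iic] at *; omega
      · simp only [Set.mem_Ici] at *; omega
  · apply le_sInf
    rintro y ⟨a, ha, b, hb, hab, hy⟩
    simp only [Set.mem_Iic, Set.mem_Ici] at ha hb
    by_cases hal : l j ≤ a
    · refine le_trans (min_le_left _ _) (le_trans (min_le_left _ _) (sInf_le ?_))
      exact ⟨a, ⟨hal, ha⟩, b, hb, hab, hy⟩
    · by_cases hbr : b ≤ r j
      · refine le_trans (min_le_left _ _) (le_trans (min_le_right _ _) (sInf_le ?_))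
        exact ⟨a, ha, b, ⟨hb, hbr⟩, hab, hy⟩
      · refine le_trans (min_le_right _ _) (sInf_le ?_)
        refine ⟨a, ?_, b, ?_, hab, hy⟩
        · simp only [Set.mem_Iic]; omega
        · simp only [Set.mem_Ici]; omega
end
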